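/- Let M be a compact connected manifold equipped with an action of a compact torus G, let 𝔤' be a subspace of the Lie algebra 𝔤 of G such that 𝔤' acts on M locally freely, and let ω be a G-invariant transverse symplectic form on M with respect to F_{𝔤'}. Let v_1,…,v_k ∈ 𝔤 and suppose that for each i there exists a smooth function h_{v_i} : M → ℝ with dh_{v_i} = −ι_{X_{v_i}}ω. Let c ∈ ℝ^k be a regular value of h = (h_{v_1},…,h_{v_k}) : M → ℝ^k. Then the subspace 𝔤'' = 𝔤' + ℝv_1 + … + ℝv_k acts on h^{-1}(c) locally freely, and the restriction ω|_{h^{-1}(c)} is a transverse symplectic form on h^{-1}(c) with respect to the foliation F_{𝔤''} whose leaves are the 𝔤''-orbits. -/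

import Mathlib

/-!
Write `Xᵢ = X_{vᵢ}`. By `G`-invariance of `ω`, the function `ω(Xᵢ, Xⱼ)` is constant along the
flow of `vⱼ`, so `h_{vᵢ}` grows linearly along it with slope `-ω(Xᵢ, Xⱼ)`; on a compact manifold
`h_{vᵢ}` is bounded, hence `ω(Xᵢ, Xⱼ) = 0`. Everything else is linear algebra in each tangent
space: the radical of `ω` is `T𝓕_{𝔤'}`, the `Xᵢ` span an isotropic subspace, and regularity of `c`
says that the functionals `ω(Xᵢ, -) = -dh_{vᵢ}` are linearly independent. Then
`ker dh = (span Xᵢ)^ω` contains `T𝓕_{𝔤'} + span Xᵢ`, which is exactly the radical of `ω` restricted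
to `ker dh`; and `∑ aᵢ Xᵢ ∈ T𝓕_{𝔤'}` forces `a = 0`, which gives local freeness of `𝔤''`.
-/

open Manifold Set MeasureTheory
noncomputable section

namespace Paper

/-- The differential of a map between manifolds at a point, as a continuous linear map
between the model spaces of the tangent spaces (recall `TangentSpace I x = E`). -/
def mder {E F : Type*} [NormedAddCommGroup E] [NormedSpace ℝ E]
    [NormedAddCommGroup F] [NormedSpace ℝ F]
    (I : ModelWithCorners ℝ E E) (I' : ModelWithCorners ℝ F F)
    {M N : Type*} [TopologicalSpace M] [ChartedSpace E M] [TopologicalSpace N]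
    [ChartedSpace F N] (f : M → N) (x : M) : E →L[ℝ] F :=
  show E →L[ℝ] F from mfderiv I I' f x

/-- A smooth action of the compact torus `G = (S¹)^m = ℝ^m/ℤ^m` on a manifold `M`, encoded
through the exponential map of its Lie algebra `𝔤 = ℝ^m`:  `act v = exp(v) · (-)`. -/
structure TorusAction (m : ℕ) {E : Type*} [NormedAddCommGroup E] [NormedSpace ℝ E]
    (I : ModelWithCorners ℝ E E) (M : Type*) [TopologicalSpace M] [ChartedSpace E M] where
  act : (Fin m → ℝ) → M → M
  act_add : ∀ v w x, act (v + w) x = act v (act w x)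
  act_zero : ∀ x, act 0 x = x
  act_int : ∀ v : Fin m → ℝ, (∀ i, ∃ k : ℤ, v i = (k : ℝ)) → act v = id
  smooth : ContMDiff ((𝓘(ℝ, Fin m → ℝ)).prod I) I (⊤ : ℕ∞) fun p : (Fin m → ℝ) × M => act p.1 p.2

/-- The fundamental vector field generated by `v ∈ 𝔤 = ℝ^m`, evaluated at `x`
(an element of `TangentSpace I x = E`). -/
def TorusAction.fundVec {E : Type*} [NormedAddCommGroup E] [NormedSpace ℝ E]
    {I : ModelWithCorners ℝ E E} {M : Type*} [TopologicalSpace M] [ChartedSpace E M]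
    {m : ℕ} (A : TorusAction m I M) (v : Fin m → ℝ) (x : M) : E :=
  mder 𝓘(ℝ, ℝ) I (fun t : ℝ => A.act (t • v) x) 0 1

/-- Effectiveness of the torus action: only lattice elements (i.e. the identity of the torus)
act trivially. -/
def TorusAction.Effective {E : Type*} [NormedAddCommGroup E] [NormedSpace ℝ E]
    {I : ModelWithCorners ℝ E E} {M : Type*} [TopologicalSpace M] [ChartedSpace E M]
    {m : ℕ} (A : TorusAction m I M) : Prop :=
  ∀ v : Fin m → ℝ, A.act v = id → ∀ i, ∃ k : ℤ, v i = (k : ℝ)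

/-- Composition of a bilinear form with a linear map in both entries (the pullback of a
`2`-form along a differential). -/
def conj2 {E F : Type*} [NormedAddCommGroup E] [NormedSpace ℝ E] [NormedAddCommGroup F]
    [NormedSpace ℝ F] (ω : E →L[ℝ] E →L[ℝ] ℝ) (g : F →L[ℝ] E) : F →L[ℝ] F →L[ℝ] ℝ :=
  (((ω.comp g).flip).comp g).flip

/-- The local representative of a `2`-form in the preferred chart at `x₀`, i.e. the pullback
of `ω` under the inverse of the chart. -/
def locRep₂ {E : Type*} [NormedAddCommGroup E] [NormedSpace ℝ E]
    {M : Type*} [TopologicalSpace M] [ChartedSpace E M] (I : ModelWithCorners ℝ E E)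
    (ω : M → E →L[ℝ] E →L[ℝ] ℝ) (x₀ : M) : E → E →L[ℝ] E →L[ℝ] ℝ := fun y =>
  conj2 (ω ((extChartAt I x₀).symm y)) (mder 𝓘(ℝ, E) I (extChartAt I x₀).symm y)

/-- A `2`-form on a manifold is closed iff in every preferred chart the alternation of the
derivative of its local representative vanishes (`dω = 0`). -/
def IsClosedTwoForm {E : Type*} [NormedAddCommGroup E] [NormedSpace ℝ E]
    {M : Type*} [TopologicalSpace M] [ChartedSpace E M] (I : ModelWithCorners ℝ E E)
    (ω : M → E →L[ℝ] E →L[ℝ] ℝ) : Prop :=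
  ∀ x₀ : M, ∀ y ∈ (extChartAt I x₀).target, ∀ u v w : E,
    fderiv ℝ (fun z => locRep₂ I ω x₀ z v w) y u
      - fderiv ℝ (fun z => locRep₂ I ω x₀ z u w) y v
      + fderiv ℝ (fun z => locRep₂ I ω x₀ z u v) y w = 0

/-- The local representative of a `1`-form in the preferred chart at `x₀`. -/
def locRep₁ {E : Type*} [NormedAddCommGroup E] [NormedSpace ℝ E]
    {M : Type*} [TopologicalSpace M] [ChartedSpace E M] (I : ModelWithCorners ℝ E E)
    (β : M → E →L[ℝ] ℝ) (x₀ : M) : E → E →L[ℝ] ℝ := fun y =>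
  (β ((extChartAt I x₀).symm y)).comp (mder 𝓘(ℝ, E) I (extChartAt I x₀).symm y)

/-- A `1`-form on a manifold is closed iff the derivative of each of its local
representatives is symmetric (`dβ = 0`). -/
def IsClosedOneForm {E : Type*} [NormedAddCommGroup E] [NormedSpace ℝ E]
    {M : Type*} [TopologicalSpace M] [ChartedSpace E M] (I : ModelWithCorners ℝ E E)
    (β : M → E →L[ℝ] ℝ) : Prop :=
  ∀ x₀ : M, ∀ y ∈ (extChartAt I x₀).target, ∀ u v : E,
    fderiv ℝ (fun z => locRep₁ I β x₀ z v) y u = fderiv ℝ (fun z => locRep₁ I β x₀ z u) y v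

/-- `ω` is a transverse symplectic form with respect to the distribution `D` (the tangent
distribution of a foliation): a smooth closed `2`-form whose kernel at each point is
exactly `D`. -/
structure IsTransverseSymplectic {E : Type*} [NormedAddCommGroup E] [NormedSpace ℝ E]
    {M : Type*} [TopologicalSpace M] [ChartedSpace E M] (I : ModelWithCorners ℝ E E)
    (ω : M → E →L[ℝ] E →L[ℝ] ℝ) (D : M → Submodule ℝ E) : Prop where
  smooth : ContMDiff I 𝓘(ℝ, E →L[ℝ] E →L[ℝ] ℝ) (⊤ : ℕ∞) ω
  alternating : ∀ x u, ω x u u = 0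
  closed : IsClosedTwoForm I ω
  kernel : ∀ (x : M) (u : E), (∀ w, ω x u w = 0) ↔ u ∈ D x

/-- Invariance of a `2`-form under the torus action: the pullback of `ω` by every element
of the torus is `ω`. -/
def GInvariantForm {E : Type*} [NormedAddCommGroup E] [NormedSpace ℝ E]
    {I : ModelWithCorners ℝ E E} {M : Type*} [TopologicalSpace M] [ChartedSpace E M]
    {m : ℕ} (A : TorusAction m I M) (ω : M → E →L[ℝ] E →L[ℝ] ℝ) : Prop :=
  ∀ (v : Fin m → ℝ) (x : M), conj2 (ω (A.act v x)) (mder I I (A.act v) x) = ω x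

/-- The tangent distribution `T𝓕_{𝔤'}` of the orbit foliation of a subspace `𝔤' ⊆ 𝔤`:
its fiber at `x` is spanned by the fundamental vector fields of elements of `𝔤'`. -/
def orbitDist {E : Type*} [NormedAddCommGroup E] [NormedSpace ℝ E]
    {I : ModelWithCorners ℝ E E} {M : Type*} [TopologicalSpace M] [ChartedSpace E M]
    {m : ℕ} (A : TorusAction m I M) (g' : Set (Fin m → ℝ)) (x : M) : Submodule ℝ E :=
  Submodule.span ℝ {e : E | ∃ v ∈ g', e = A.fundVec v x}

/-- The (infinitesimal) action of the subspace `𝔤' ⊆ 𝔤` on `M` is locally free: the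
fundamental vector field of a nonzero element of `𝔤'` vanishes nowhere. -/
def LocallyFree {E : Type*} [NormedAddCommGroup E] [NormedSpace ℝ E]
    {I : ModelWithCorners ℝ E E} {M : Type*} [TopologicalSpace M] [ChartedSpace E M]
    {m : ℕ} (A : TorusAction m I M) (g' : Set (Fin m → ℝ)) : Prop :=
  ∀ v ∈ g', v ≠ 0 → ∀ x : M, A.fundVec v x ≠ 0

end Paper

namespace LinearMap

variable {K V : Type*} [CommRing K] [AddCommGroup V] [Module K V]
  {B : V →ₗ[K] V →ₗ[K] K} {ι : Type*} {e : ι → V}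

theorem eq_zero_of_sum_smul_mem_ker [Fintype ι]
    (hsurj : Function.Surjective fun u i => B (e i) u)
    {a : ι → K} (ha : ∑ j, a j • e j ∈ ker B) : a = 0 := by
  classical
  funext i
  obtain ⟨u, hu⟩ := hsurj (Pi.single i 1)
  have hdual : ∀ j, B (e j) u = (Pi.single i 1 : ι → K) j := fun j => congrFun hu j
  calc a i = B (∑ j, a j • e j) u := by simp [hdual, Pi.single_apply]
    _ = 0 := by rw [mem_ker.mp ha, zero_apply]

theorem apply_eq_zero_of_mem_ker_sup_span (hB : B.IsAlt) (hiso : ∀ i j, B (e i) (e j) = 0)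
    {u : V} (hu : u ∈ ker B ⊔ Submodule.span K (Set.range e)) (i : ι) : B (e i) u = 0 := by
  suffices ker B ⊔ Submodule.span K (Set.range e) ≤ ker (B (e i)) from this hu
  refine sup_le (fun r hr => ?_) (Submodule.span_le.mpr ?_)
  · rw [mem_ker, ← hB.neg, mem_ker.mp hr, zero_apply, neg_zero]
  · rintro _ ⟨j, rfl⟩
    exact hiso i j

theorem forall_apply_eq_zero_iff_mem_ker_sup_span [Fintype ι]
    (hsurj : Function.Surjective fun u i => B (e i) u) (u : V) :
    (∀ w, (∀ i, B (e i) w = 0) → B u w = 0) ↔ u ∈ ker B ⊔ Submodule.span K (Set.range e) := by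
  classical
  constructor
  · intro hu
    choose f hf using fun j => hsurj (Pi.single j 1)
    have hdual : ∀ i j, B (e i) (f j) = (Pi.single j 1 : ι → K) i := fun i j =>
      congrFun (hf j) i
    -- `f` is dual to `e`, so `z - ∑ j, B (e j) z • f j` is annihilated by every `B (e i)`
    have hexpand : ∀ z, B u z = ∑ j, B (e j) z * B u (f j) := by
      intro z
      have := hu (z - ∑ j, B (e j) z • f j) fun i => by
        simp [hdual, Pi.single_apply]
      simpa [sub_eq_zero] using this
    have hker : u - ∑ j, B u (f j) • e j ∈ ker B := by
      refine mem_ker.mpr (ext fun z => ?_)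
      simp [hexpand z, mul_comm]
    have hspan : ∑ j, B u (f j) • e j ∈ Submodule.span K (Set.range e) :=
      (Submodule.mem_span_range_iff_exists_fun K).mpr ⟨_, rfl⟩
    simpa using Submodule.add_mem_sup hker hspan
  · intro hu w hw
    obtain ⟨r, hr, s, hs, rfl⟩ := Submodule.mem_sup.mp hu
    obtain ⟨c, rfl⟩ := (Submodule.mem_span_range_iff_exists_fun K).mp hs
    simp [mem_ker.mp hr, hw]

end LinearMap

theorem eq_zero_of_forall_hasDerivAt_of_abs_le {α : ℝ → ℝ} {c C : ℝ}
    (hα : ∀ t, HasDerivAt α c t) (hC : ∀ t, |α t| ≤ C) : c = 0 := by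
  have hlin : ∀ t, α t = α 0 + c * t := by
    intro t
    have hd : ∀ s, HasDerivAt (fun s => α s - c * s) (c - c * 1) s := fun s =>
      (hα s).sub ((hasDerivAt_id' s).const_mul c)
    simp only [mul_one, sub_self] at hd
    have := is_const_of_deriv_eq_zero (fun s => (hd s).differentiableAt)
      (fun s => (hd s).deriv) t 0
    simp only [mul_zero, sub_zero] at this
    linarith
  by_contra hc
  have hfar := abs_le.mp (hC ((2 * C + 1) / c))
  have hnear := abs_le.mp (hC 0)
  rw [hlin, mul_div_cancel₀ _ hc] at hfar
  linarith

namespace Paper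

section

variable {E : Type*} [NormedAddCommGroup E] [NormedSpace ℝ E]
  {M : Type*} [TopologicalSpace M] [ChartedSpace E M] {I : ModelWithCorners ℝ E E} {m : ℕ}

namespace TorusAction

variable (A : TorusAction m I M)

theorem contMDiff_act_left (x : M) :
    ContMDiff 𝓘(ℝ, Fin m → ℝ) I (⊤ : ℕ∞) fun z => A.act z x :=
  A.smooth.comp (contMDiff_id.prodMk contMDiff_const)

theorem contMDiff_act (u : Fin m → ℝ) : ContMDiff I I (⊤ : ℕ∞) (A.act u) :=
  A.smooth.comp (contMDiff_const.prodMk contMDiff_id)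

theorem contMDiff_act_smul (w : Fin m → ℝ) (x : M) :
    ContMDiff 𝓘(ℝ, ℝ) I (⊤ : ℕ∞) fun t : ℝ => A.act (t • w) x :=
  (A.contMDiff_act_left x).comp
    (contMDiff_iff_contDiff.mpr (contDiff_id.smul contDiff_const))

def fundVecLinearMap (x : M) : (Fin m → ℝ) →ₗ[ℝ] E :=
  (mder 𝓘(ℝ, Fin m → ℝ) I (fun z => A.act z x) 0).toLinearMap

theorem fundVec_eq_fundVecLinearMap (v : Fin m → ℝ) (x : M) :
    A.fundVec v x = A.fundVecLinearMap x v := by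
  let ℓ := ContinuousLinearMap.toSpanSingleton ℝ v
  have h := mfderiv_comp_apply_of_eq (f := ℓ) (g := fun z => A.act z x) (y := 0) 0
    ((A.contMDiff_act_left x).mdifferentiableAt (by simp)) ℓ.mdifferentiableAt (by simp [ℓ]) 1
  rw [ℓ.mfderiv_eq] at h
  exact h.trans (congrArg (A.fundVecLinearMap x) (one_smul ℝ v))

theorem fundVec_act (u v : Fin m → ℝ) (x : M) :
    A.fundVec v (A.act u x) = mder I I (A.act u) x (A.fundVec v x) := by
  have horbit :
      (fun t : ℝ => A.act (t • v) (A.act u x)) = A.act u ∘ fun t => A.act (t • v) x := by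
    funext t
    simp only [Function.comp_apply, ← A.act_add, add_comm]
  exact (congrArg (fun γ => mfderiv 𝓘(ℝ, ℝ) I γ 0 1) horbit).trans
    (mfderiv_comp_apply_of_eq 0 ((A.contMDiff_act u).mdifferentiableAt (by simp))
      ((A.contMDiff_act_smul v x).mdifferentiableAt (by simp)) (by simp [A.act_zero]) 1)

theorem hasDerivAt_comp_act_smul {f : M → ℝ} (w : Fin m → ℝ) (x : M) (t₀ : ℝ)
    (hf : MDifferentiableAt I 𝓘(ℝ, ℝ) f (A.act (t₀ • w) x)) :
    HasDerivAt (fun t => f (A.act (t • w) x))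
      (mder I 𝓘(ℝ, ℝ) f (A.act (t₀ • w) x) (A.fundVec w (A.act (t₀ • w) x))) t₀ := by
  set y := A.act (t₀ • w) x
  set γ := fun s : ℝ => A.act (s • w) y
  have hγ : MDifferentiableAt 𝓘(ℝ, ℝ) I γ 0 :=
    (A.contMDiff_act_smul w y).mdifferentiableAt (by simp)
  have hy : γ 0 = y := by simp [γ, A.act_zero]
  have hval : deriv (f ∘ γ) 0 = mder I 𝓘(ℝ, ℝ) f y (A.fundVec w y) := by
    rw [← fderiv_apply_one_eq_deriv, ← mfderiv_eq_fderiv]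
    exact mfderiv_comp_apply_of_eq 0 hf hγ hy 1
  have hderiv := hval ▸ (hf.comp_of_eq 0 hγ hy).differentiableAt.hasDerivAt
  have hshift : (fun t => f (A.act (t • w) x)) = fun t => (f ∘ γ) (t - t₀) := by
    funext t
    simp only [Function.comp_apply, γ, y, ← A.act_add, ← add_smul, sub_add_cancel]
  rw [hshift]
  exact HasDerivAt.comp_sub_const t₀ t₀ (by rwa [sub_self])

theorem orbitDist_eq_map (p : Submodule ℝ (Fin m → ℝ)) (x : M) :
    orbitDist A (p : Set (Fin m → ℝ)) x = p.map (A.fundVecLinearMap x) := by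
  have himage : {e : E | ∃ v ∈ (p : Set (Fin m → ℝ)), e = A.fundVec v x} =
      A.fundVecLinearMap x '' p := by
    ext e
    simp [A.fundVec_eq_fundVecLinearMap, eq_comm]
  rw [orbitDist, himage, Submodule.span_image, Submodule.span_eq]

theorem orbitDist_sup_span_range (p : Submodule ℝ (Fin m → ℝ)) {ι : Type*}
    (v : ι → Fin m → ℝ) (x : M) :
    orbitDist A ((p ⊔ Submodule.span ℝ (Set.range v) : Submodule ℝ (Fin m → ℝ)) :
        Set (Fin m → ℝ)) x =
      orbitDist A (p : Set (Fin m → ℝ)) x ⊔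
        Submodule.span ℝ (Set.range fun i => A.fundVec (v i) x) := by
  rw [A.orbitDist_eq_map, A.orbitDist_eq_map, Submodule.map_sup, Submodule.map_span,
    ← Set.range_comp]
  simp only [Function.comp_def, A.fundVec_eq_fundVecLinearMap]

theorem comp_act_smul_eq {f : M → ℝ} (hf : MDifferentiable I 𝓘(ℝ, ℝ) f)
    {w : Fin m → ℝ} (h0 : ∀ y, mder I 𝓘(ℝ, ℝ) f y (A.fundVec w y) = 0) (t : ℝ) (x : M) :
    f (A.act (t • w) x) = f x := by
  have hderiv := fun s => h0 _ ▸ A.hasDerivAt_comp_act_smul w x s (hf _)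
  simpa [A.act_zero] using
    is_const_of_deriv_eq_zero (fun s => (hderiv s).differentiableAt)
      (fun s => (hderiv s).deriv) t 0

end TorusAction

theorem LocallyFree.fundVec_ne_zero_of_mem_sup_span {A : TorusAction m I M}
    {p : Submodule ℝ (Fin m → ℝ)} (hfree : LocallyFree A (p : Set (Fin m → ℝ)))
    {ι : Type*} [Fintype ι] {v : ι → Fin m → ℝ} {x : M}
    (hind : ∀ a : ι → ℝ,
      ∑ j, a j • A.fundVec (v j) x ∈ orbitDist A (p : Set (Fin m → ℝ)) x → a = 0)
    {w : Fin m → ℝ} (hw : w ∈ p ⊔ Submodule.span ℝ (Set.range v)) (hw0 : w ≠ 0) :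
    A.fundVec w x ≠ 0 := by
  obtain ⟨w', hw', _, hs, rfl⟩ := Submodule.mem_sup.mp hw
  obtain ⟨a, rfl⟩ := (Submodule.mem_span_range_iff_exists_fun ℝ).mp hs
  intro hzero
  rw [A.fundVec_eq_fundVecLinearMap, map_add, map_sum] at hzero
  have ha : a = 0 := by
    refine hind a ?_
    simp only [A.fundVec_eq_fundVecLinearMap, A.orbitDist_eq_map, ← map_smul,
      eq_neg_of_add_eq_zero_right hzero]
    exact neg_mem (Submodule.mem_map_of_mem hw')
  subst ha
  simp only [Pi.zero_apply, zero_smul, map_zero, Finset.sum_const_zero, add_zero] at hzero hw0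
  exact hfree w' hw' hw0 x (by rwa [A.fundVec_eq_fundVecLinearMap])

theorem GInvariantForm.apply_fundVec_act {A : TorusAction m I M}
    {ω : M → E →L[ℝ] E →L[ℝ] ℝ} (hinv : GInvariantForm A ω) (a b u : Fin m → ℝ) (x : M) :
    ω (A.act u x) (A.fundVec a (A.act u x)) (A.fundVec b (A.act u x)) =
      ω x (A.fundVec a x) (A.fundVec b x) := by
  rw [A.fundVec_act, A.fundVec_act]
  exact congrArg (fun B => B (A.fundVec a x) (A.fundVec b x)) (hinv u x)

theorem GInvariantForm.apply_fundVec_fundVec_eq_zero [CompactSpace M] {A : TorusAction m I M}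
    {ω : M → E →L[ℝ] E →L[ℝ] ℝ} (hinv : GInvariantForm A ω) {f : M → ℝ}
    (hf : MDifferentiable I 𝓘(ℝ, ℝ) f) {a : Fin m → ℝ}
    (hham : ∀ x u, mder I 𝓘(ℝ, ℝ) f x u = -ω x (A.fundVec a x) u) (b : Fin m → ℝ) (x : M) :
    ω x (A.fundVec a x) (A.fundVec b x) = 0 := by
  obtain ⟨C, hC⟩ := isCompact_univ.exists_bound_of_continuousOn hf.continuous.continuousOn
  refine neg_eq_zero.mp (eq_zero_of_forall_hasDerivAt_of_abs_le (fun t => ?_)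
    (fun t => hC (A.act (t • b) x) (Set.mem_univ _)))
  have := A.hasDerivAt_comp_act_smul b x t (hf _)
  rwa [hham, hinv.apply_fundVec_act] at this

theorem surjective_mder_apply_of_surjective_mder_pi {ι : Type*} [Fintype ι] {f : ι → M → ℝ}
    {x : M} (hf : MDifferentiableAt I 𝓘(ℝ, ι → ℝ) (fun y i => f i y) x)
    (hsurj : Function.Surjective (mder I 𝓘(ℝ, ι → ℝ) (fun y i => f i y) x)) :
    Function.Surjective fun u i => mder I 𝓘(ℝ, ℝ) (f i) x u := by
  have hcomponent :
      ∀ u i, mder I 𝓘(ℝ, ι → ℝ) (fun y i => f i y) x u i = mder I 𝓘(ℝ, ℝ) (f i) x u := by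
    intro u i
    let π := ContinuousLinearMap.proj (R := ℝ) (φ := fun _ : ι => ℝ) i
    have := mfderiv_comp_apply x π.mdifferentiableAt hf u
    rw [π.mfderiv_eq] at this
    exact this.symm
  intro y
  obtain ⟨u, hu⟩ := hsurj y
  exact ⟨u, funext fun i => (hcomponent u i).symm.trans (congrFun hu i)⟩

theorem IsTransverseSymplectic.ker_toLinearMap₁₂ {ω : M → E →L[ℝ] E →L[ℝ] ℝ}
    {D : M → Submodule ℝ E} (hω : IsTransverseSymplectic I ω D) (x : M) :
    LinearMap.ker (ω x).toLinearMap₁₂ = D x := by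
  ext u
  simp [LinearMap.ext_iff, hω.kernel]

end

theorem restriction_to_regular_level_set_is_transverse_symplectic_general
    {E : Type*} [NormedAddCommGroup E] [NormedSpace ℝ E]
    {M : Type*} [TopologicalSpace M] [ChartedSpace E M]
    {I : ModelWithCorners ℝ E E}
    [CompactSpace M] {m : ℕ}
    (A : TorusAction m I M) (g' : Submodule ℝ (Fin m → ℝ))
    (hfree : LocallyFree A (g' : Set (Fin m → ℝ)))
    (ω : M → E →L[ℝ] E →L[ℝ] ℝ)
    (hω : IsTransverseSymplectic I ω (orbitDist A (g' : Set (Fin m → ℝ))))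
    (hinv : GInvariantForm A ω)
    (k : ℕ) (v : Fin k → (Fin m → ℝ)) (hs : Fin k → M → ℝ)
    (hsmooth : ∀ i, ContMDiff I 𝓘(ℝ, ℝ) (⊤ : ℕ∞) (hs i))
    (hham : ∀ (i : Fin k) (x : M) (u : E),
      mder I 𝓘(ℝ, ℝ) (hs i) x u = - ω x (A.fundVec (v i) x) u)
    (c : Fin k → ℝ)
    (hreg : ∀ x : M, (∀ i, hs i x = c i) →
      Function.Surjective (mder I 𝓘(ℝ, Fin k → ℝ) (fun y i => hs i y) x)) :
    -- `𝔤''` acts on the level set `h⁻¹(c)` …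
    (∀ w ∈ (g' ⊔ Submodule.span ℝ (Set.range v) : Submodule ℝ (Fin m → ℝ)), ∀ t : ℝ,
      ∀ x : M, (∀ i, hs i x = c i) → ∀ i, hs i (A.act (t • w) x) = c i) ∧
    -- … locally freely, …
    (∀ w ∈ (g' ⊔ Submodule.span ℝ (Set.range v) : Submodule ℝ (Fin m → ℝ)), w ≠ 0 →
      ∀ x : M, (∀ i, hs i x = c i) → A.fundVec w x ≠ 0) ∧
    -- … the orbit directions of `𝔤''` are tangent to the level set, …
    (∀ x : M, (∀ i, hs i x = c i) →
      ∀ u ∈ orbitDist A ((g' ⊔ Submodule.span ℝ (Set.range v) : Submodule ℝ (Fin m → ℝ)) :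
          Set (Fin m → ℝ)) x, ∀ i, mder I 𝓘(ℝ, ℝ) (hs i) x u = 0) ∧
    -- … and on `T(h⁻¹(c)) = ker dh` the kernel of `ω` is exactly `T𝓕_{𝔤''}`.
    (∀ x : M, (∀ i, hs i x = c i) → ∀ u : E, (∀ i, mder I 𝓘(ℝ, ℝ) (hs i) x u = 0) →
      ((∀ w' : E, (∀ i, mder I 𝓘(ℝ, ℝ) (hs i) x w' = 0) → ω x u w' = 0) ↔
        u ∈ orbitDist A ((g' ⊔ Submodule.span ℝ (Set.range v) : Submodule ℝ (Fin m → ℝ)) :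
          Set (Fin m → ℝ)) x)) := by
  set g'' : Submodule ℝ (Fin m → ℝ) := g' ⊔ Submodule.span ℝ (Set.range v)
  set B : M → E →ₗ[ℝ] E →ₗ[ℝ] ℝ := fun x => -(ω x).toLinearMap₁₂
  have hdh : ∀ x u i, mder I 𝓘(ℝ, ℝ) (hs i) x u = B x (A.fundVec (v i) x) u := by
    simp [B, hham]
  have hker : ∀ x, LinearMap.ker (B x) = orbitDist A (g' : Set (Fin m → ℝ)) x := fun x => by
    rw [LinearMap.ker_neg, hω.ker_toLinearMap₁₂]
  have hdist : ∀ x, orbitDist A (g'' : Set (Fin m → ℝ)) x =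
      LinearMap.ker (B x) ⊔ Submodule.span ℝ (Set.range fun i => A.fundVec (v i) x) := fun x => by
    rw [hker, A.orbitDist_sup_span_range]
  have hsurj : ∀ x, (∀ i, hs i x = c i) →
      Function.Surjective fun u i => B x (A.fundVec (v i) x) u := fun x hx => by
    simpa only [hdh] using surjective_mder_apply_of_surjective_mder_pi
      ((contMDiff_pi_space.mpr hsmooth).mdifferentiableAt (by simp)) (hreg x hx)
  have htangent : ∀ x, ∀ u ∈ orbitDist A (g'' : Set (Fin m → ℝ)) x, ∀ i,
      mder I 𝓘(ℝ, ℝ) (hs i) x u = 0 := by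
    intro x u hu i
    rw [hdist] at hu
    rw [hdh]
    refine LinearMap.apply_eq_zero_of_mem_ker_sup_span (fun u => by simp [B, hω.alternating])
      (fun i j => ?_) hu i
    simp [B, hinv.apply_fundVec_fundVec_eq_zero ((hsmooth i).mdifferentiable (by simp)) (hham i)]
  refine ⟨?_, ?_, fun x _ => htangent x, ?_⟩
  · intro w hw t x hx i
    rw [A.comp_act_smul_eq ((hsmooth i).mdifferentiable (by simp))
      (fun y => htangent y _ (Submodule.subset_span ⟨w, hw, rfl⟩) i)]
    exact hx i
  · intro w hw hw0 x hx
    exact hfree.fundVec_ne_zero_of_mem_sup_span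
      (fun a ha => LinearMap.eq_zero_of_sum_smul_mem_ker (hsurj x hx) (by rwa [hker])) hw hw0
  · intro x hx u _
    simpa [B, hdh, hdist] using
      LinearMap.forall_apply_eq_zero_iff_mem_ker_sup_span (hsurj x hx) u

/-- Let `M` be a compact connected manifold with an action of a compact
torus, `𝔤' ⊆ 𝔤` a subspace acting locally freely, `ω` a `G`-invariant transverse symplectic
form with respect to `𝓕_{𝔤'}`, and `h = (h_{v_1},…,h_{v_k})` with `dh_{v_i} = -ι_{X_{v_i}}ω`.
If `c` is a regular value of `h`, then `𝔤'' = 𝔤' + ℝv_1 + … + ℝv_k` acts on the level set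
`h⁻¹(c)` locally freely, and the restriction of `ω` to `h⁻¹(c)` is a transverse symplectic
form with respect to the orbit foliation `𝓕_{𝔤''}` (its kernel on the tangent space
`T(h⁻¹(c)) = ker dh` of the level set is exactly `T𝓕_{𝔤''}`). -/
theorem restriction_to_regular_level_set_is_transverse_symplectic
    {E : Type*} [NormedAddCommGroup E] [NormedSpace ℝ E]
    {M : Type*} [TopologicalSpace M] [ChartedSpace E M]
    {I : ModelWithCorners ℝ E E} [IsManifold I (⊤ : ℕ∞) M]
    [CompactSpace M] [ConnectedSpace M] {m : ℕ}
    (A : TorusAction m I M) (g' : Submodule ℝ (Fin m → ℝ))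
    (hfree : LocallyFree A (g' : Set (Fin m → ℝ)))
    (ω : M → E →L[ℝ] E →L[ℝ] ℝ)
    (hω : IsTransverseSymplectic I ω (orbitDist A (g' : Set (Fin m → ℝ))))
    (hinv : GInvariantForm A ω)
    (k : ℕ) (v : Fin k → (Fin m → ℝ)) (hs : Fin k → M → ℝ)
    (hsmooth : ∀ i, ContMDiff I 𝓘(ℝ, ℝ) (⊤ : ℕ∞) (hs i))
    (hham : ∀ (i : Fin k) (x : M) (u : E),
      mder I 𝓘(ℝ, ℝ) (hs i) x u = - ω x (A.fundVec (v i) x) u)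
    (c : Fin k → ℝ)
    (hreg : ∀ x : M, (∀ i, hs i x = c i) →
      Function.Surjective (mder I 𝓘(ℝ, Fin k → ℝ) (fun y i => hs i y) x)) :
    -- `𝔤''` acts on the level set `h⁻¹(c)` …
    (∀ w ∈ (g' ⊔ Submodule.span ℝ (Set.range v) : Submodule ℝ (Fin m → ℝ)), ∀ t : ℝ,
      ∀ x : M, (∀ i, hs i x = c i) → ∀ i, hs i (A.act (t • w) x) = c i) ∧
    -- … locally freely, …
    (∀ w ∈ (g' ⊔ Submodule.span ℝ (Set.range v) : Submodule ℝ (Fin m → ℝ)), w ≠ 0 →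
      ∀ x : M, (∀ i, hs i x = c i) → A.fundVec w x ≠ 0) ∧
    -- … the orbit directions of `𝔤''` are tangent to the level set, …
    (∀ x : M, (∀ i, hs i x = c i) →
      ∀ u ∈ orbitDist A ((g' ⊔ Submodule.span ℝ (Set.range v) : Submodule ℝ (Fin m → ℝ)) :
          Set (Fin m → ℝ)) x, ∀ i, mder I 𝓘(ℝ, ℝ) (hs i) x u = 0) ∧
    -- … and on `T(h⁻¹(c)) = ker dh` the kernel of `ω` is exactly `T𝓕_{𝔤''}`.
    (∀ x : M, (∀ i, hs i x = c i) → ∀ u : E, (∀ i, mder I 𝓘(ℝ, ℝ) (hs i) x u = 0) →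
      ((∀ w' : E, (∀ i, mder I 𝓘(ℝ, ℝ) (hs i) x w' = 0) → ω x u w' = 0) ↔
        u ∈ orbitDist A ((g' ⊔ Submodule.span ℝ (Set.range v) : Submodule ℝ (Fin m → ℝ)) :
          Set (Fin m → ℝ)) x)) :=
  restriction_to_regular_level_set_is_transverse_symplectic_general A g' hfree ω hω hinv k v hs
    hsmooth hham c hreg

end Paper
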